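/- arXiv:1409.3805 — 6 statements merged into one kernel-verified Lean document; each statement's English description precedes it below -/
import Mathlib

section
/- Let A be a complete, cocomplete category with stable monomorphisms and split epimorphisms. Then Monad(A) has (strong epi, mono)-factorizations of morphisms: every monad morphism f : S → T factors as f = m ∘ e where e is a monad morphism with split epic components and m is a monad morphism with monic components; moreover m is a monomorphism and e a strong epimorphism in Monad(A). -/
open CategoryTheory CategoryTheory.Limits

universe v u

/-- A cocomplete category has *stable monomorphisms* if coproducts of parallel
collections of monomorphisms are monic, and colimits of chains of monomorphisms
consist of monics, with the map induced by any cocone of monics being monic. -/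
structure StableMonos (A : Type u) [Category.{v} A] [HasColimits A] : Prop where
  /-- coproducts of parallel collections of monomorphisms are monic -/
  sigma_map_mono : ∀ {ι : Type v} {X Y : ι → A} (f : ∀ i, X i ⟶ Y i),
    (∀ i, Mono (f i)) → Mono (Limits.Sigma.map f)
  /-- the binary instance of the previous condition -/
  coprod_map_mono : ∀ {X X' Y Y' : A} (f : X ⟶ Y) (g : X' ⟶ Y'),
    Mono f → Mono g → Mono (Limits.coprod.map f g)
  /-- colimits of chains of monomorphisms consist of monics -/
  chain_colimit_mono : ∀ {J : Type v} [LinearOrder J] (D : J ⥤ A),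
    (∀ (i j : J) (h : i ⟶ j), Mono (D.map h)) → ∀ j : J, Mono (Limits.colimit.ι D j)
  /-- the map induced by a cocone of monics on the colimit of a chain of monics is monic -/
  chain_desc_mono : ∀ {J : Type v} [LinearOrder J] (D : J ⥤ A)
    (_ : ∀ (i j : J) (h : i ⟶ j), Mono (D.map h))
    (c : Limits.Cocone D), (∀ j : J, Mono (c.ι.app j)) → Mono (Limits.colimit.desc D c)

/-!
Factor `f` pointwise through the coequalizer `Q` of its kernel pair. The components of
`e : S ⟶ Q` are regular, hence split, epimorphisms, and this forces `m : Q ⟶ T` to be pointwise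
monic. As `e ◫ e` is again pointwise split epic, the multiplication of `Q` is the diagonal fill-in
of the square saying that `f` preserves multiplication; the monad laws for `Q` and the
monad-morphism laws for `e` and `m` are then reflected along the pointwise monic `m`.

Monomorphisms of monads are pointwise monic: the kernel pair of a monad morphism, computed
pointwise, is again a monad with monad-morphism projections, and these coincide when the
morphism is monic. Hence pointwise diagonal fill-ins against `e` assemble into monad morphisms,
and `e` is a strong epimorphism of monads.
-/

namespace CategoryTheory

variable {A : Type u} [Category.{v} A]

section Reflection

variable {ι : Type*} {M : ι → Monad A} {F : A ⥤ A} (p : ∀ i, F ⟶ (M i).toFunctor)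
  (η : ∀ X, X ⟶ F.obj X) (μ : ∀ X, F.obj (F.obj X) ⟶ F.obj X)

theorem Monad.naturality_η_of_jointlyMono
    (hp : ∀ ⦃W X : A⦄ ⦃a b : W ⟶ F.obj X⦄, (∀ i, a ≫ (p i).app X = b ≫ (p i).app X) → a = b)
    (hη : ∀ i X, η X ≫ (p i).app X = (M i).η.app X) {X Y : A} (h : X ⟶ Y) :
    h ≫ η Y = η X ≫ F.map h :=
  hp fun i => by
    simp only [Category.assoc, (p i).naturality, hη, reassoc_of% (hη i X)]
    exact ((M i).η.naturality h)

theorem Monad.naturality_μ_of_jointlyMono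
    (hp : ∀ ⦃W X : A⦄ ⦃a b : W ⟶ F.obj X⦄, (∀ i, a ≫ (p i).app X = b ≫ (p i).app X) → a = b)
    (hμ : ∀ i X, μ X ≫ (p i).app X = F.map ((p i).app X) ≫ (p i).app _ ≫ (M i).μ.app X)
    {X Y : A} (h : X ⟶ Y) :
    F.map (F.map h) ≫ μ Y = μ X ≫ F.map h :=
  hp fun i => by
    have := (M i).μ.naturality h
    simp only [Functor.comp_map] at this
    simp only [Category.assoc, (p i).naturality, hμ, reassoc_of% (hμ i X), ← this,
      ← (p i).naturality_assoc, ← Functor.map_comp_assoc]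

def Monad.ofJointlyMono
    (hp : ∀ ⦃W X : A⦄ ⦃a b : W ⟶ F.obj X⦄, (∀ i, a ≫ (p i).app X = b ≫ (p i).app X) → a = b)
    (hη : ∀ i X, η X ≫ (p i).app X = (M i).η.app X)
    (hμ : ∀ i X, μ X ≫ (p i).app X = F.map ((p i).app X) ≫ (p i).app _ ≫ (M i).μ.app X) :
    Monad A where
  toFunctor := F
  η := { app := η, naturality := fun _ _ h => naturality_η_of_jointlyMono p η hp hη h }
  μ := { app := μ, naturality := fun _ _ h => naturality_μ_of_jointlyMono p μ hp hμ h }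
  assoc X := hp fun i => by
    have := (M i).μ.naturality ((p i).app X)
    simp only [Functor.comp_map] at this
    simp only [Category.assoc, hμ, ← Functor.map_comp_assoc]
    simp only [Functor.map_comp, Category.assoc, (p i).naturality_assoc, Monad.assoc,
      reassoc_of% this, reassoc_of% (hμ i (F.obj X))]
    rfl
  left_unit X := hp fun i => by
    have := naturality_η_of_jointlyMono p η hp hη ((p i).app X)
    simp only [Category.assoc, hμ, ← reassoc_of% this, reassoc_of% (hη i ((M i).obj X)),
      Monad.left_unit, Functor.id_obj, Category.comp_id, Category.id_comp]
  right_unit X := hp fun i => by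
    simp only [Category.assoc, hμ, Functor.id_obj, ← Functor.map_comp_assoc, hη,
      (p i).naturality_assoc, Monad.right_unit, Category.comp_id, Category.id_comp]

def Monad.homOfJointlyMono
    (hp : ∀ ⦃W X : A⦄ ⦃a b : W ⟶ F.obj X⦄, (∀ i, a ≫ (p i).app X = b ≫ (p i).app X) → a = b)
    (hη : ∀ i X, η X ≫ (p i).app X = (M i).η.app X)
    (hμ : ∀ i X, μ X ≫ (p i).app X = F.map ((p i).app X) ≫ (p i).app _ ≫ (M i).μ.app X)
    (i : ι) : ofJointlyMono p η μ hp hη hμ ⟶ M i where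
  toNatTrans := p i
  app_η := hη i
  app_μ X := (hμ i X).trans (Category.assoc _ _ _).symm

end Reflection

theorem MonadHom.comp_μ_comp {F : A ⥤ A} {M N : Monad A} (n : M ⟶ N) (p : F ⟶ M.toFunctor)
    (X : A) :
    F.map (p.app X) ≫ p.app (M.obj X) ≫ M.μ.app X ≫ n.app X =
      F.map ((p ≫ n.toNatTrans).app X) ≫ (p ≫ n.toNatTrans).app (N.obj X) ≫ N.μ.app X := by
  simp only [n.app_μ, NatTrans.comp_app, Functor.map_comp, Category.assoc, p.naturality_assoc]

def MonadHom.ofCompMono {R M N : Monad A} (l : R.toFunctor ⟶ M.toFunctor) (n : M ⟶ N)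
    (hn : ∀ X, Mono (n.app X)) (v : R ⟶ N) (h : l ≫ n.toNatTrans = v.toNatTrans) : R ⟶ M where
  toNatTrans := l
  app_η X := by
    have := hn X
    rw [← cancel_mono (n.app X), Category.assoc, ← NatTrans.comp_app, h]
    simp
  app_μ X := by
    have := hn X
    rw [← cancel_mono (n.app X)]
    have := MonadHom.comp_μ_comp n l X
    simp only [Category.assoc, h] at this ⊢
    rw [this, ← NatTrans.comp_app, h]
    simp

theorem pullback_app_hom_ext {C D : Type*} [Category C] [Category D] [HasPullbacks D]
    {F G H : C ⥤ D} {f : F ⟶ H} {g : G ⟶ H} {X : C} {W : D} {a b : W ⟶ (pullback f g).obj X}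
    (h₁ : a ≫ (pullback.fst f g).app X = b ≫ (pullback.fst f g).app X)
    (h₂ : a ≫ (pullback.snd f g).app X = b ≫ (pullback.snd f g).app X) : a = b :=
  PullbackCone.IsLimit.hom_ext (isLimitOfHasPullbackOfPreservesLimit ((evaluation C D).obj X) f g)
    h₁ h₂

namespace MonadHom

variable [HasPullbacks A] {M N : Monad A} (n : M ⟶ N)

noncomputable abbrev kernelPairFunctor : A ⥤ A := pullback n.toNatTrans n.toNatTrans

-- The two projections, indexed by `Bool` so that `Monad.ofJointlyMono` applies.
noncomputable abbrev kernelPairProj (b : Bool) : kernelPairFunctor n ⟶ M.toFunctor :=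
  cond b (pullback.fst _ _) (pullback.snd _ _)

noncomputable def kernelPairη : 𝟭 A ⟶ kernelPairFunctor n :=
  pullback.lift M.η M.η rfl

noncomputable def kernelPairμ : kernelPairFunctor n ⋙ kernelPairFunctor n ⟶ kernelPairFunctor n :=
  pullback.lift
    (Functor.whiskerRight (kernelPairProj n true) (kernelPairFunctor n) ≫
      Functor.whiskerLeft M.toFunctor (kernelPairProj n true) ≫ M.μ)
    (Functor.whiskerRight (kernelPairProj n false) (kernelPairFunctor n) ≫
      Functor.whiskerLeft M.toFunctor (kernelPairProj n false) ≫ M.μ)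
    (by ext X; simp only [NatTrans.comp_app, Functor.whiskerRight_app, Functor.whiskerLeft_app,
      Category.assoc, comp_μ_comp, kernelPairProj, cond, pullback.condition])

theorem kernelPairη_proj (b : Bool) (X : A) :
    (kernelPairη n).app X ≫ (kernelPairProj n b).app X = M.η.app X := by
  cases b
  · exact NatTrans.congr_app (pullback.lift_snd _ _ _) X
  · exact NatTrans.congr_app (pullback.lift_fst _ _ _) X

theorem kernelPairμ_proj (b : Bool) (X : A) :
    (kernelPairμ n).app X ≫ (kernelPairProj n b).app X =
      (kernelPairFunctor n).map ((kernelPairProj n b).app X) ≫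
        (kernelPairProj n b).app (M.obj X) ≫ M.μ.app X := by
  cases b
  · exact NatTrans.congr_app (pullback.lift_snd _ _ _) X
  · exact NatTrans.congr_app (pullback.lift_fst _ _ _) X

theorem kernelPair_hom_ext_app {W X : A} {a b : W ⟶ (kernelPairFunctor n).obj X}
    (h : ∀ i, a ≫ (kernelPairProj n i).app X = b ≫ (kernelPairProj n i).app X) : a = b :=
  pullback_app_hom_ext (h true) (h false)

noncomputable def kernelPairMonad : Monad A :=
  Monad.ofJointlyMono (M := fun _ => M) (kernelPairProj n) (kernelPairη n).app
    (kernelPairμ n).app (fun _ _ _ _ => kernelPair_hom_ext_app n) (kernelPairη_proj n)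
    (kernelPairμ_proj n)

noncomputable def kernelPairMonadProj (b : Bool) : kernelPairMonad n ⟶ M :=
  Monad.homOfJointlyMono (M := fun _ => M) (kernelPairProj n) (kernelPairη n).app
    (kernelPairμ n).app (fun _ _ _ _ => kernelPair_hom_ext_app n) (kernelPairη_proj n)
    (kernelPairμ_proj n) b

theorem mono_app_of_mono [Mono n] (X : A) : Mono (n.app X) := by
  have hproj : kernelPairMonadProj n true ≫ n = kernelPairMonadProj n false ≫ n :=
    ext' _ _ (funext fun X => NatTrans.congr_app pullback.condition X)
  have hfst : kernelPairProj n true = kernelPairProj n false :=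
    congrArg MonadHom.toNatTrans ((cancel_mono n).1 hproj)
  have : Mono ((monadToFunctor A).map n) :=
    (mono_iff_fst_eq_snd (pullbackIsPullback _ _)).2 hfst
  exact inferInstanceAs (Mono (((monadToFunctor A).map n).app X))

end MonadHom

theorem MonadHom.mono_of_mono_app {M N : Monad A} (n : M ⟶ N) (hn : ∀ X, Mono (n.app X)) :
    Mono n :=
  (monadToFunctor A).mono_of_mono_map (NatTrans.mono_of_mono_app (α := n.toNatTrans))

section RegularCoimage

variable {C D : Type*} [Category C] [Category D] [HasPullbacks D] [HasCoequalizers D]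
  {F G : C ⥤ D} (f : F ⟶ G)

noncomputable abbrev regularCoimage : C ⥤ D := coequalizer (pullback.fst f f) (pullback.snd f f)

noncomputable abbrev regularCoimage.π : F ⟶ regularCoimage f := coequalizer.π _ _

noncomputable abbrev regularCoimage.ι : regularCoimage f ⟶ G :=
  coequalizer.desc f pullback.condition

theorem regularCoimage.π_ι : π f ≫ ι f = f := coequalizer.π_desc _ _

theorem regularCoimage.π_app_ι_app (X : C) : (π f).app X ≫ (ι f).app X = f.app X :=
  NatTrans.congr_app (π_ι f) X

theorem regularCoimage.isRegularEpi_π_app (X : C) : IsRegularEpi ((π f).app X) :=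
  ⟨⟨{ W := (pullback f f).obj X
      left := (pullback.fst f f).app X
      right := (pullback.snd f f).app X
      w := NatTrans.congr_app (coequalizer.condition _ _) X
      isColimit := isColimitOfHasCoequalizerOfPreservesColimit ((evaluation C D).obj X) _ _ }⟩⟩

theorem regularCoimage.π_app_eq_of_comp_eq {X : C} {W : D} {a b : W ⟶ F.obj X}
    (h : a ≫ f.app X = b ≫ f.app X) : a ≫ (π f).app X = b ≫ (π f).app X := by
  obtain ⟨t, rfl, rfl⟩ := PullbackCone.IsLimit.lift'
    (isLimitOfHasPullbackOfPreservesLimit ((evaluation C D).obj X) f f) a b h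
  have hc := NatTrans.congr_app (coequalizer.condition (pullback.fst f f) (pullback.snd f f)) X
  simp only [NatTrans.comp_app] at hc
  rw [Category.assoc, Category.assoc]
  exact t ≫= hc

theorem regularCoimage.mono_ι_app (X : C) [IsSplitEpi ((π f).app X)] : Mono ((ι f).app X) := by
  refine ⟨fun u v huv => ?_⟩
  have h : (u ≫ section_ ((π f).app X)) ≫ f.app X = (v ≫ section_ ((π f).app X)) ≫ f.app X := by
    simpa only [← π_app_ι_app f X, Category.assoc, IsSplitEpi.id_assoc] using huv
  simpa only [Category.assoc, IsSplitEpi.id, Category.comp_id] using π_app_eq_of_comp_eq f h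

end RegularCoimage

theorem NatTrans.commSq_hasLift {C D : Type*} [Category C] [Category D] {F G H K : C ⥤ D}
    {e : F ⟶ G} {n : H ⟶ K} {u : F ⟶ H} {v : G ⟶ K} (sq : CommSq u e n v)
    [∀ X, StrongEpi (e.app X)] [∀ X, Mono (n.app X)] : sq.HasLift := by
  have sq_app (X : C) : CommSq (u.app X) (e.app X) (n.app X) (v.app X) :=
    ⟨by simpa only [NatTrans.comp_app] using NatTrans.congr_app sq.w X⟩
  let l : G ⟶ H :=
    { app X := (sq_app X).lift
      naturality X Y h := by
        rw [← cancel_mono (n.app Y), Category.assoc, Category.assoc, (sq_app Y).fac_right,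
          n.naturality, (sq_app X).fac_right_assoc, v.naturality] }
  exact CommSq.HasLift.mk' ⟨l, by ext X; exact (sq_app X).fac_left,
    by ext X; exact (sq_app X).fac_right⟩

theorem MonadHom.strongEpi_of_isSplitEpi_app [HasPullbacks A] {S R : Monad A} (e : S ⟶ R)
    (he : ∀ X, IsSplitEpi (e.app X)) : StrongEpi e := by
  have : Epi e := (monadToFunctor A).epi_of_epi_map (NatTrans.epi_of_epi_app (α := e.toNatTrans))
  refine StrongEpi.mk' fun Z₁ Z₂ n _ u v sq => ?_
  have sq' := sq.map (monadToFunctor A)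
  have : ∀ X, IsSplitEpi (((monadToFunctor A).map e).app X) := he
  have : ∀ X, Mono (((monadToFunctor A).map n).app X) := mono_app_of_mono n
  have := NatTrans.commSq_hasLift sq'
  exact CommSq.HasLift.mk'
    ⟨MonadHom.ofCompMono sq'.lift n (mono_app_of_mono n) v sq'.fac_right,
      MonadHom.ext' _ _ (congrArg NatTrans.app sq'.fac_left),
      MonadHom.ext' _ _ (congrArg NatTrans.app sq'.fac_right)⟩

section ImageMonad

variable {S T : Monad A} {Q : A ⥤ A} (e : S.toFunctor ⟶ Q) (m : Q ⟶ T.toFunctor) (f : S ⟶ T)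

theorem imageμ_commSq (hf : e ≫ m = f.toNatTrans) (X : A) :
    CommSq (S.μ.app X ≫ e.app X) (S.map (e.app X) ≫ e.app (Q.obj X)) (m.app X)
      (Q.map (m.app X) ≫ m.app (T.obj X) ≫ T.μ.app X) := ⟨by
  have := f.app_μ X
  simp only [← hf, NatTrans.comp_app, Functor.map_comp, Category.assoc] at this ⊢
  rw [this, e.naturality_assoc]⟩

noncomputable def imageμ [∀ X, IsSplitEpi (e.app X)] [∀ X, Mono (m.app X)]
    (hf : e ≫ m = f.toNatTrans) (X : A) : Q.obj (Q.obj X) ⟶ Q.obj X :=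
  (imageμ_commSq e m f hf X).lift

theorem imageη_comp (hf : e ≫ m = f.toNatTrans) (X : A) :
    (S.η.app X ≫ e.app X) ≫ m.app X = T.η.app X := by
  rw [Category.assoc, ← NatTrans.comp_app, hf, f.app_η]

noncomputable def imageMonad [∀ X, IsSplitEpi (e.app X)] [∀ X, Mono (m.app X)]
    (hf : e ≫ m = f.toNatTrans) : Monad A :=
  Monad.ofJointlyMono (M := fun _ : Unit => T) (fun _ => m) (fun X => S.η.app X ≫ e.app X)
    (imageμ e m f hf) (fun _ _ _ _ h => (cancel_mono _).1 (h ())) (fun _ => imageη_comp e m f hf)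
    (fun _ X => (imageμ_commSq e m f hf X).fac_right)

noncomputable def imageMonad.ι [∀ X, IsSplitEpi (e.app X)] [∀ X, Mono (m.app X)]
    (hf : e ≫ m = f.toNatTrans) : imageMonad e m f hf ⟶ T :=
  Monad.homOfJointlyMono (M := fun _ : Unit => T) (fun _ => m) (fun X => S.η.app X ≫ e.app X)
    (imageμ e m f hf) (fun _ _ _ _ h => (cancel_mono _).1 (h ())) (fun _ => imageη_comp e m f hf)
    (fun _ X => (imageμ_commSq e m f hf X).fac_right) ()

noncomputable def imageMonad.π [∀ X, IsSplitEpi (e.app X)] [hm : ∀ X, Mono (m.app X)]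
    (hf : e ≫ m = f.toNatTrans) : S ⟶ imageMonad e m f hf :=
  MonadHom.ofCompMono e (imageMonad.ι e m f hf) hm f hf

end ImageMonad

end CategoryTheory

theorem stmt8_general (A : Type u) [Category.{v} A] [HasLimits A] [HasColimits A]
    (hsplit : ∀ {X Y : A} (f : X ⟶ Y), StrongEpi f → IsSplitEpi f) :
    ∀ {S T : Monad A} (f : S ⟶ T),
      ∃ (R : Monad A) (e : S ⟶ R) (m : R ⟶ T),
        e ≫ m = f ∧
        (∀ X : A, IsSplitEpi (e.toNatTrans.app X)) ∧
        (∀ X : A, Mono (m.toNatTrans.app X)) ∧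
        StrongEpi e ∧ Mono m := by
  intro S T f
  have hπ (X : A) : IsSplitEpi ((regularCoimage.π f.toNatTrans).app X) :=
    have := regularCoimage.isRegularEpi_π_app f.toNatTrans X
    hsplit _ inferInstance
  have hι (X : A) := regularCoimage.mono_ι_app f.toNatTrans X
  have hf := regularCoimage.π_ι f.toNatTrans
  refine ⟨imageMonad _ _ f hf, imageMonad.π _ _ f hf, imageMonad.ι _ _ f hf,
    MonadHom.ext' _ _ (congrArg NatTrans.app hf), hπ, hι,
    MonadHom.strongEpi_of_isSplitEpi_app _ hπ, MonadHom.mono_of_mono_app _ hι⟩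

/-- Let `A` be complete and cocomplete with stable monomorphisms and split (strong)
epimorphisms. Then `Monad A` has (strong epi, mono)-factorizations: every monad
morphism `f : S ⟶ T` factors as `f = e ≫ m` with `e` having split epic components
and `m` monic components; moreover `e` is a strong epimorphism and `m` a
monomorphism in `Monad A`. -/
theorem stmt8 (A : Type u) [Category.{v} A] [HasLimits A] [HasColimits A]
    (hst : StableMonos A)
    (hsplit : ∀ {X Y : A} (f : X ⟶ Y), StrongEpi f → IsSplitEpi f) :
    ∀ {S T : Monad A} (f : S ⟶ T),
      ∃ (R : Monad A) (e : S ⟶ R) (m : R ⟶ T),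
        e ≫ m = f ∧
        (∀ X : A, IsSplitEpi (e.toNatTrans.app X)) ∧
        (∀ X : A, Mono (m.toNatTrans.app X)) ∧
        StrongEpi e ∧ Mono m :=
  stmt8_general A hsplit
end

section
/- Let A be a complete, cocomplete category with stable monomorphisms and split epimorphisms. Then every diagram in Monad(A) possessing a weakly terminal object has a colimit; in particular, Monad(A) has all coequalizers. -/
/-!
For `t` weakly terminal in `J`, a joint algebra of `D` is the same as a `D t`-algebra whose
restrictions along any two morphisms `i ⟶ t` agree; these form a full subcategory of
`(D t).Algebra` closed under limits, so it is complete and its forgetful functor `U` to `A`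
preserves limits. Given `f : X ⟶ U W`, the free extension `T X ⟶ W` factors through the
coequalizer of its kernel pair. That quotient map is a strong, hence split, epimorphism, so the
quotient inherits an algebra structure, which is again joint. Quotients split in this way are
determined up to isomorphism by an idempotent of `T X`, so they form a solution set, and the
general adjoint functor theorem gives a left adjoint `L`. The monad `U L` is then a colimit of
`D`: a cocone `D ⟶ N` turns every `N`-algebra into a joint algebra, and transposing the unit of
`N` across `L ⊣ U` gives the unique factorisation `U L ⟶ N`. A parallel pair has a weakly
terminal object, so `Monad A` has coequalizers.
-/

open CategoryTheory CategoryTheory.Limits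

universe v u

namespace CategoryTheory.Monad

variable {A : Type u} [Category.{v} A] {T : Monad A}

namespace Algebra

lemma a_eq_of_section {V B : T.Algebra} (p : V ⟶ B) {s : B.A ⟶ V.A} (hs : s ≫ p.f = 𝟙 B.A) :
    B.a = T.map s ≫ V.a ≫ p.f := by
  rw [← p.h, ← T.map_comp_assoc, hs, T.map_id, Category.id_comp]

variable {V B B' : T.Algebra} (p : V ⟶ B) (p' : V ⟶ B') {s : B.A ⟶ V.A} {s' : B'.A ⟶ V.A}
  (hs : s ≫ p.f = 𝟙 B.A) (hs' : s' ≫ p'.f = 𝟙 B'.A) (hp : p.f ≫ s = p'.f ≫ s')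

def homOfSection : B ⟶ B' where
  f := s ≫ p'.f
  h := by
    rw [a_eq_of_section p hs, T.map_comp, Category.assoc, p'.h]
    simp only [Category.assoc]
    rw [reassoc_of% hp, hs', Category.comp_id]

lemma comp_homOfSection : p ≫ homOfSection p p' hs hs' hp = p' := by
  ext
  simp only [comp_f, homOfSection]
  rw [reassoc_of% hp, hs', Category.comp_id]

end Algebra

namespace Algebra.Hom

variable [HasPullbacks A] [HasCoequalizers A] {V W : T.Algebra} (h : V ⟶ W)

noncomputable def coimage : A := coequalizer (pullback.fst h.f h.f) (pullback.snd h.f h.f)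

noncomputable def toCoimage : V.A ⟶ h.coimage := coequalizer.π _ _

noncomputable def fromCoimage : h.coimage ⟶ W.A := coequalizer.desc h.f pullback.condition

lemma toCoimage_fromCoimage : h.toCoimage ≫ h.fromCoimage = h.f := coequalizer.π_desc _ _

lemma toCoimage_eq_of_comp_eq {Y : A} {α β : Y ⟶ V.A} (hαβ : α ≫ h.f = β ≫ h.f) :
    α ≫ h.toCoimage = β ≫ h.toCoimage := by
  have := pullback.lift α β hαβ ≫=
    coequalizer.condition (pullback.fst h.f h.f) (pullback.snd h.f h.f)
  rwa [pullback.lift_fst_assoc, pullback.lift_snd_assoc] at this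

instance : StrongEpi h.toCoimage :=
  inferInstanceAs (StrongEpi (coequalizer.π (pullback.fst h.f h.f) (pullback.snd h.f h.f)))

section SplitCoimage

variable [IsSplitEpi h.toCoimage]

lemma section_toCoimage_comp : section_ h.toCoimage ≫ h.f = h.fromCoimage := by
  rw [← toCoimage_fromCoimage, IsSplitEpi.id_assoc]

lemma toCoimage_section_comp : h.toCoimage ≫ section_ h.toCoimage ≫ h.f = h.f := by
  rw [section_toCoimage_comp, toCoimage_fromCoimage]

lemma map_toCoimage_map_section :
    T.map h.toCoimage ≫ T.map (section_ h.toCoimage) ≫ V.a ≫ h.toCoimage =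
      V.a ≫ h.toCoimage := by
  rw [← T.map_comp_assoc]
  simp only [← Category.assoc]
  apply toCoimage_eq_of_comp_eq
  rw [Category.assoc, ← h.h, ← T.map_comp_assoc, Category.assoc, toCoimage_section_comp]

noncomputable def coimageAlgebra : T.Algebra where
  A := h.coimage
  a := T.map (section_ h.toCoimage) ≫ V.a ≫ h.toCoimage
  unit := by
    rw [← T.unit_naturality_assoc (f := section_ h.toCoimage), V.unit_assoc, IsSplitEpi.id]
  assoc := by
    simp only [Functor.map_comp, Category.assoc, map_toCoimage_map_section]
    rw [← V.assoc_assoc, T.mu_naturality_assoc (f := section_ h.toCoimage)]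

noncomputable def toCoimageHom : V ⟶ h.coimageAlgebra where
  f := h.toCoimage
  h := h.map_toCoimage_map_section

noncomputable def fromCoimageHom : h.coimageAlgebra ⟶ W where
  f := h.fromCoimage
  h := by
    simp only [coimageAlgebra, Category.assoc, toCoimage_fromCoimage, ← h.h, ← T.map_comp_assoc,
      section_toCoimage_comp]

lemma toCoimageHom_fromCoimageHom : h.toCoimageHom ≫ h.fromCoimageHom = h := by
  ext
  exact h.toCoimage_fromCoimage

lemma coimageAlgebra_app_comp_a {G : A ⥤ A} (α β : G ⟶ T.toFunctor)
    (hW : α.app W.A ≫ W.a = β.app W.A ≫ W.a) :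
    α.app h.coimage ≫ h.coimageAlgebra.a = β.app h.coimage ≫ h.coimageAlgebra.a := by
  have hV : α.app V.A ≫ V.a ≫ h.toCoimage = β.app V.A ≫ V.a ≫ h.toCoimage := by
    simp only [← Category.assoc]
    apply toCoimage_eq_of_comp_eq
    rw [Category.assoc, Category.assoc, ← h.h, ← α.naturality_assoc, hW, β.naturality_assoc]
  simp only [coimageAlgebra]
  rw [← α.naturality_assoc, hV, β.naturality_assoc]

end SplitCoimage

end Algebra.Hom

instance [HasLimits A] : HasLimits T.Algebra :=
  hasLimits_of_hasLimits_createsLimits T.forget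

section JointAlgebra

variable {J : Type*} [Category J] (D : J ⥤ Monad A) (t : J)

/-- For weakly terminal `t`, a joint algebra of `D` (an algebra for every monad of `D`,
compatible with all connecting morphisms) amounts to a `D.obj t`-algebra whose restrictions
along any two morphisms `i ⟶ t` agree. -/
def IsJointAlgebra : ObjectProperty (D.obj t).Algebra :=
  fun W => ∀ (i : J) (u v : i ⟶ t), (D.map u).app W.A ≫ W.a = (D.map v).app W.A ≫ W.a

abbrev JointAlgebra := (IsJointAlgebra D t).FullSubcategory

abbrev JointAlgebra.forget : JointAlgebra D t ⥤ A := (IsJointAlgebra D t).ι ⋙ (D.obj t).forget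

instance (K : Type*) [Category K] : (IsJointAlgebra D t).IsClosedUnderLimitsOfShape K := by
  refine ⟨fun W ⟨hW⟩ i u v =>
    (isLimitOfPreserves (D.obj t).forget hW.isLimit).hom_ext fun j => ?_⟩
  change ((D.map u).app W.A ≫ W.a) ≫ (hW.π.app j).f =
    ((D.map v).app W.A ≫ W.a) ≫ (hW.π.app j).f
  rw [Category.assoc, Category.assoc, show W.a ≫ (hW.π.app j).f = _ from (hW.π.app j).h.symm,
    ← (D.map u).naturality_assoc, ← (D.map v).naturality_assoc, hW.prop_diag_obj j i u v]

structure SplitJointQuotient (X : A) where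
  B : JointAlgebra D t
  π : (D.obj t).free.obj X ⟶ B.obj
  σ : B.obj.A ⟶ ((D.obj t).free.obj X).A
  σ_π : σ ≫ π.f = 𝟙 B.obj.A

variable [HasLimits A]

noncomputable instance : CreatesLimits (IsJointAlgebra D t).ι := ⟨inferInstance⟩

noncomputable instance : CreatesLimits (JointAlgebra.forget D t) :=
  inferInstanceAs (CreatesLimits ((IsJointAlgebra D t).ι ⋙ (D.obj t).forget))

instance : HasLimits (JointAlgebra D t) :=
  hasLimits_of_hasLimits_createsLimits (JointAlgebra.forget D t)

instance : PreservesLimits (JointAlgebra.forget D t) :=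
  preservesLimits_of_createsLimits_and_hasLimits _

variable [HasCoequalizers A]

/-- A map `f : X ⟶ U W` factors through the coimage of its free extension, a split joint quotient
of the free algebra; by `Algebra.homOfSection` it also factors through any other split joint
quotient with the same idempotent on `T X`, so one quotient per idempotent suffices. -/
lemma solutionSetCondition_jointAlgebraForget
    (hsplit : ∀ {X Y : A} (f : X ⟶ Y), StrongEpi f → IsSplitEpi f) :
    SolutionSetCondition.{v} (JointAlgebra.forget D t) := by
  intro X
  refine ⟨{e // ∃ Q : SplitJointQuotient D t X, Q.π.f ≫ Q.σ = e}, fun e => e.2.choose.B,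
    fun e => (D.obj t).η.app X ≫ e.2.choose.π.f, fun W f => ?_⟩
  have hf := ((D.obj t).adj.homEquiv X W.obj).apply_symm_apply f
  simp only [Adjunction.homEquiv_unit, adj_unit, forget_map] at hf
  generalize ((D.obj t).adj.homEquiv X W.obj).symm f = h at hf
  have : IsSplitEpi h.toCoimage := hsplit _ inferInstance
  have hsec := IsSplitEpi.id h.toCoimage
  let Q : SplitJointQuotient D t X :=
    ⟨⟨h.coimageAlgebra, fun i u v => h.coimageAlgebra_app_comp_a _ _ (W.property i u v)⟩,
      h.toCoimageHom, _, hsec⟩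
  let e : {e // ∃ Q : SplitJointQuotient D t X, Q.π.f ≫ Q.σ = e} := ⟨_, Q, rfl⟩
  let g := Algebra.homOfSection e.2.choose.π Q.π e.2.choose.σ_π Q.σ_π e.2.choose_spec ≫
    h.fromCoimageHom
  have hg : e.2.choose.π ≫ g = h := by
    rw [← Category.assoc, Algebra.comp_homOfSection, Algebra.Hom.toCoimageHom_fromCoimageHom]
  refine ⟨e, ObjectProperty.homMk g, ?_⟩
  erw [Category.assoc, ← Algebra.comp_f, hg]
  exact hf

lemma isRightAdjoint_jointAlgebraForget
    (hsplit : ∀ {X Y : A} (f : X ⟶ Y), StrongEpi f → IsSplitEpi f) :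
    (JointAlgebra.forget D t).IsRightAdjoint :=
  isRightAdjoint_of_preservesLimits_of_solutionSetCondition _
    (solutionSetCondition_jointAlgebraForget D t hsplit)

end JointAlgebra

section AdjunctionMonad

variable {S : Type*} [Category S] {F : S ⥤ T.Algebra} {L : A ⥤ S} (adj : L ⊣ F ⋙ T.forget)

lemma map_unit_comp_a_comp_counit (Z : A) :
    T.map (adj.unit.app (F.obj (L.obj Z)).A) ≫ (F.obj (L.obj (F.obj (L.obj Z)).A)).a ≫
      (F.map (adj.counit.app (L.obj Z))).f = (F.obj (L.obj Z)).a := by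
  erw [← (F.map (adj.counit.app (L.obj Z))).h, ← T.map_comp_assoc,
    adj.right_triangle_components (L.obj Z), T.map_id, Category.id_comp]
  rfl

def monadHomOfCompForget : T ⟶ adj.toMonad where
  app Z := T.map (adj.unit.app Z) ≫ (F.obj (L.obj Z)).a
  naturality Z Z' f := by
    erw [Category.assoc, ← (F.map (L.map f)).h, ← T.map_comp_assoc, ← T.map_comp_assoc,
      adj.unit_naturality]
    rfl
  app_η Z := by
    erw [← T.unit_naturality_assoc (f := adj.unit.app Z), (F.obj (L.obj Z)).unit,
      Category.comp_id]
    rfl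
  app_μ Z := by
    erw [Category.assoc, Category.assoc, map_unit_comp_a_comp_counit, T.map_comp_assoc,
      ← (F.obj (L.obj Z)).assoc, T.mu_naturality_assoc]

lemma map_app_comp_a {N : Monad A} (m : adj.toMonad ⟶ N) (Z : A) :
    T.map (m.app Z) ≫ (monadHomOfCompForget adj ≫ m).app (N.obj Z) ≫ N.μ.app Z =
      (F.obj (L.obj Z)).a ≫ m.app Z := by
  change T.map (m.app Z) ≫ ((monadHomOfCompForget adj).app _ ≫ m.app _) ≫ N.μ.app Z = _
  erw [← Category.assoc, ← Category.assoc, (monadHomOfCompForget adj).naturality (m.app Z),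
    Category.assoc, Category.assoc, ← Category.assoc (adj.toMonad.map _), ← m.app_μ,
    ← Category.assoc]
  congr 1
  exact (Category.assoc _ _ _).trans (map_unit_comp_a_comp_counit adj Z)

end AdjunctionMonad

namespace JointAlgebra

variable {J : Type*} [Category J] {D : J ⥤ Monad A} {t : J} {L : A ⥤ JointAlgebra D t}
  (adj : L ⊣ JointAlgebra.forget D t)

lemma map_comp_monadHomOfCompForget {i : J} (u v : i ⟶ t) :
    D.map u ≫ monadHomOfCompForget adj = D.map v ≫ monadHomOfCompForget adj := by
  ext Z
  change (D.map u).app Z ≫ (D.obj t).map (adj.unit.app Z) ≫ (L.obj Z).obj.a =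
    (D.map v).app Z ≫ (D.obj t).map (adj.unit.app Z) ≫ (L.obj Z).obj.a
  erw [← (D.map u).naturality_assoc, ← (D.map v).naturality_assoc, (L.obj Z).property i u v]
  rfl

def cocone (g : ∀ i, i ⟶ t) : Cocone D where
  pt := adj.toMonad
  ι :=
    { app i := D.map (g i) ≫ monadHomOfCompForget adj
      naturality i j u := by
        rw [← Category.assoc, ← D.map_comp, map_comp_monadHomOfCompForget adj (u ≫ g j) (g i)]
        exact (Category.comp_id _).symm }

variable (t) in
def ofCocone (s : Cocone D) : s.pt.Algebra ⥤ JointAlgebra D t :=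
  ObjectProperty.lift _ (algebraFunctorOfMonadHom (s.ι.app t)) fun Y i u v => by
    have hw : ∀ w : i ⟶ t, (D.map w).app Y.A ≫ (s.ι.app t).app Y.A = (s.ι.app i).app Y.A :=
      fun w => congrArg (fun φ : D.obj i ⟶ s.pt => φ.app Y.A) (s.w w)
    change (D.map u).app Y.A ≫ (s.ι.app t).app Y.A ≫ Y.a =
      (D.map v).app Y.A ≫ (s.ι.app t).app Y.A ≫ Y.a
    rw [reassoc_of% hw u, reassoc_of% hw v]

variable (s : Cocone D)

noncomputable def unitTranspose (Z : A) : L.obj Z ⟶ (ofCocone t s).obj (s.pt.free.obj Z) :=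
  (adj.homEquiv _ _).symm (s.pt.η.app Z)

lemma unit_comp_unitTranspose (Z : A) :
    adj.unit.app Z ≫ (JointAlgebra.forget D t).map (unitTranspose adj s Z) = s.pt.η.app Z :=
  (adj.homEquiv_unit _ _ _).symm.trans ((adj.homEquiv _ _).apply_symm_apply _)

lemma map_comp_unitTranspose {Z Z' : A} (f : Z ⟶ Z') :
    L.map f ≫ unitTranspose adj s Z' =
      unitTranspose adj s Z ≫ (ofCocone t s).map (s.pt.free.map f) := by
  let K := s.pt.free ⋙ ofCocone t s
  calc L.map f ≫ unitTranspose adj s Z'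
      = (adj.homEquiv Z (K.obj Z')).symm (f ≫ s.pt.η.app Z') :=
        (adj.homEquiv_naturality_left_symm (Y := K.obj Z') f (s.pt.η.app Z')).symm
    _ = (adj.homEquiv Z (K.obj Z')).symm (s.pt.η.app Z ≫ s.pt.map f) :=
        congrArg _ (s.pt.unit_naturality (f := f))
    _ = _ := adj.homEquiv_naturality_right_symm (s.pt.η.app Z) (K.map f)

lemma unitTranspose_comp_μ (Z : A) :
    (JointAlgebra.forget D t).map (unitTranspose adj s (s.pt.obj Z)) ≫ s.pt.μ.app Z =
      (JointAlgebra.forget D t).map (adj.counit.app ((ofCocone t s).obj (s.pt.free.obj Z))) := by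
  let μ' : (ofCocone t s).obj (s.pt.free.obj (s.pt.obj Z)) ⟶
      (ofCocone t s).obj (s.pt.free.obj Z) :=
    (ofCocone t s).map { f := s.pt.μ.app Z, h := s.pt.assoc Z }
  have hμ : unitTranspose adj s (s.pt.obj Z) ≫ μ' =
      adj.counit.app ((ofCocone t s).obj (s.pt.free.obj Z)) := by
    refine (adj.homEquiv_naturality_right_symm (s.pt.η.app (s.pt.obj Z)) μ').symm.trans ?_
    erw [s.pt.left_unit Z, Adjunction.homEquiv_counit, L.map_id, Category.id_comp]
  exact ((JointAlgebra.forget D t).map_comp _ _).symm.trans (congrArg _ hμ)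

noncomputable def desc : adj.toMonad ⟶ s.pt where
  app Z := (JointAlgebra.forget D t).map (unitTranspose adj s Z)
  naturality Z Z' f := ((JointAlgebra.forget D t).map_comp _ _).symm.trans
    ((congrArg (JointAlgebra.forget D t).map (map_comp_unitTranspose adj s f)).trans
      ((JointAlgebra.forget D t).map_comp _ _))
  app_η Z := unit_comp_unitTranspose adj s Z
  app_μ Z := by
    erw [Category.assoc, unitTranspose_comp_μ]
    exact ((JointAlgebra.forget D t).map_comp _ _).symm.trans
      ((congrArg _ (adj.counit_naturality _).symm).trans ((JointAlgebra.forget D t).map_comp _ _))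

lemma monadHomOfCompForget_comp_desc : monadHomOfCompForget adj ≫ desc adj s = s.ι.app t := by
  ext Z
  change ((D.obj t).map (adj.unit.app Z) ≫ (L.obj Z).obj.a) ≫ (desc adj s).app Z = _
  erw [Category.assoc, ← (unitTranspose adj s Z).hom.h, ← Functor.map_comp_assoc,
    unit_comp_unitTranspose, (s.ι.app t).naturality_assoc, s.pt.right_unit, Category.comp_id]
  rfl

lemma eq_desc (m : adj.toMonad ⟶ s.pt) (hm : monadHomOfCompForget adj ≫ m = s.ι.app t) :
    m = desc adj s := by
  ext Z
  have hm' := map_app_comp_a adj m Z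
  rw [hm] at hm'
  let m' : L.obj Z ⟶ (ofCocone t s).obj (s.pt.free.obj Z) :=
    ObjectProperty.homMk { f := m.app Z, h := hm' }
  have : m' = unitTranspose adj s Z := by
    refine (adj.homEquiv _ _).injective ((adj.homEquiv_unit _ _ _).trans ?_)
    exact (m.app_η Z).trans
      ((adj.homEquiv_unit _ _ _).trans (unit_comp_unitTranspose adj s Z)).symm
  exact congrArg (JointAlgebra.forget D t).map this

noncomputable def isColimitCocone (g : ∀ i, i ⟶ t) : IsColimit (cocone adj g) where
  desc s := desc adj s
  fac s i := by
    change (D.map (g i) ≫ monadHomOfCompForget adj) ≫ desc adj s = s.ι.app i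
    rw [Category.assoc, monadHomOfCompForget_comp_desc, s.w]
  uniq s m hm := by
    refine eq_desc adj s m ?_
    have hc : D.map (g t) ≫ monadHomOfCompForget adj = monadHomOfCompForget adj := by
      rw [map_comp_monadHomOfCompForget adj (g t) (𝟙 t), D.map_id, Category.id_comp]
    calc monadHomOfCompForget adj ≫ m = (D.map (g t) ≫ monadHomOfCompForget adj) ≫ m := by
          rw [hc]
      _ = s.ι.app t := hm t

end JointAlgebra

lemma hasColimit_of_weaklyTerminal [HasLimits A] [HasCoequalizers A]
    (hsplit : ∀ {X Y : A} (f : X ⟶ Y), StrongEpi f → IsSplitEpi f)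
    {J : Type*} [Category J] (D : J ⥤ Monad A) (hD : ∃ j : J, ∀ i : J, Nonempty (i ⟶ j)) :
    HasColimit D := by
  obtain ⟨t, ht⟩ := hD
  have := isRightAdjoint_jointAlgebraForget D t hsplit
  exact ⟨⟨⟨_, JointAlgebra.isColimitCocone (.ofIsRightAdjoint _) fun i => (ht i).some⟩⟩⟩

end CategoryTheory.Monad

theorem stmt11_general (A : Type u) [Category.{v} A] [HasLimits A] [HasColimits A]
    (hsplit : ∀ {X Y : A} (f : X ⟶ Y), StrongEpi f → IsSplitEpi f) :
    (∀ (J : Type v) [SmallCategory J] (D : J ⥤ Monad A),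
      (∃ j : J, ∀ i : J, Nonempty (i ⟶ j)) → HasColimit D) ∧
    HasCoequalizers (Monad A) := by
  refine ⟨fun _ _ D hD => Monad.hasColimit_of_weaklyTerminal hsplit D hD,
    ⟨fun D => Monad.hasColimit_of_weaklyTerminal hsplit D ⟨.one, ?_⟩⟩⟩
  rintro (_ | _)
  exacts [⟨.left⟩, ⟨𝟙 _⟩]

/-- Let `A` be complete and cocomplete with stable monomorphisms and split (strong)
epimorphisms. Every (small) diagram in `Monad A` possessing a weakly terminal object
has a colimit; in particular `Monad A` has coequalizers. -/
theorem stmt11 (A : Type u) [Category.{v} A] [HasLimits A] [HasColimits A]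
    (hst : StableMonos A)
    (hsplit : ∀ {X Y : A} (f : X ⟶ Y), StrongEpi f → IsSplitEpi f) :
    (∀ (J : Type v) [SmallCategory J] (D : J ⥤ Monad A),
      (∃ j : J, ∀ i : J, Nonempty (i ⟶ j)) → HasColimit D) ∧
    HasCoequalizers (Monad A) :=
  stmt11_general A hsplit
end

section
/- Let A be a complete, cocomplete category with stable monomorphisms and split epimorphisms, and let D be a diagram of monads with weakly terminal object T_j. Then the category C_D of joint Eilenberg–Moore algebras for D is isomorphic, over A, to the full subcategory C of the Eilenberg–Moore category of T_j consisting of those algebras a : T_j A → A satisfying a ∘ f_A = a ∘ g_A for every parallel pair f, g : T_i → T_j of connecting morphisms in D. -/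
open CategoryTheory CategoryTheory.Limits

universe v u

variable {A : Type u} [Category.{v} A] {J : Type v} [SmallCategory J]

/-- A joint Eilenberg–Moore algebra for a diagram `D` of monads: an object equipped
with an Eilenberg–Moore algebra structure for each monad in the diagram, compatible
with all connecting morphisms. -/
structure JointAlgebra (D : J ⥤ Monad A) where
  pt : A
  act : ∀ i : J, (D.obj i).toFunctor.obj pt ⟶ pt
  unit : ∀ i : J, (D.obj i).η.app pt ≫ act i = 𝟙 pt
  assoc : ∀ i : J, (D.obj i).toFunctor.map (act i) ≫ act i =
    (D.obj i).μ.app pt ≫ act i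
  compat : ∀ {i i' : J} (f : i ⟶ i'), (D.map f).toNatTrans.app pt ≫ act i' = act i

/-- Morphisms of joint algebras: morphisms of `A` which are simultaneously
homomorphisms for every monad in the diagram. -/
@[ext]
structure JointAlgebraHom {D : J ⥤ Monad A} (X Y : JointAlgebra D) where
  f : X.pt ⟶ Y.pt
  comm : ∀ i : J, (D.obj i).toFunctor.map f ≫ Y.act i = X.act i ≫ f

instance jointAlgebraCategory (D : J ⥤ Monad A) : Category (JointAlgebra D) where
  Hom X Y := JointAlgebraHom X Y
  id X := ⟨𝟙 X.pt, by intro i; simp⟩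
  comp g h := ⟨g.f ≫ h.f, by
    intro i
    rw [Functor.map_comp, Category.assoc, h.comm, ← Category.assoc, g.comm,
      Category.assoc]⟩
  id_comp f := by apply JointAlgebraHom.ext; simp [CategoryStruct.id, CategoryStruct.comp]
  comp_id f := by apply JointAlgebraHom.ext; simp [CategoryStruct.id, CategoryStruct.comp]
  assoc f g h := by apply JointAlgebraHom.ext; simp [CategoryStruct.comp]

/-- The forgetful functor from joint algebras to the base category. -/
def jointForget (D : J ⥤ Monad A) : JointAlgebra D ⥤ A where
  obj X := X.pt
  map f := f.f
  map_id X := rfl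
  map_comp f g := rfl

/-- The predicate cutting out the full subcategory `C` of Eilenberg–Moore algebras
for `D.obj j`: those algebras equalizing all pairs of connecting morphisms into `j`. -/
def equalizingAlgebra (D : J ⥤ Monad A) (j : J) : Monad.Algebra (D.obj j) → Prop :=
  fun a => ∀ (i : J) (f g : i ⟶ j),
    (D.map f).toNatTrans.app a.A ≫ a.a = (D.map g).toNatTrans.app a.A ≫ a.a
/-!
Choose for every `i` a connecting morphism `t i : i ⟶ j`. Restricting a `T_j`-algebra
`a` along the monad morphisms `D (t i)` gives `T_i`-algebras `a ∘ (D (t i))_A`; the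
equalizing condition makes them independent of the choices, hence compatible with all
connecting morphisms. Conversely the compatibility of a joint algebra forces
`a_i = a_j ∘ (D (t i))_A`, so both round trips are identities on the nose.
-/

theorem CategoryTheory.Functor.eq_id_of_comp_faithful {C B : Type*} [Category C] [Category B]
    {F : C ⥤ C} (U : C ⥤ B) [U.Faithful] (hobj : ∀ X, F.obj X = X) (hU : F ⋙ U = U) :
    F = 𝟭 C :=
  Functor.ext hobj fun _ _ f => U.map_injective <| by
    simpa [eqToHom_map] using Functor.congr_hom hU f

section

variable {D : J ⥤ Monad A}

instance jointForget_faithful : (jointForget D).Faithful where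
  map_injective h := JointAlgebraHom.ext h

def JointAlgebra.toAlgebra (X : JointAlgebra D) (j : J) : Monad.Algebra (D.obj j) :=
  ⟨X.pt, X.act j, X.unit j, (X.assoc j).symm⟩

theorem JointAlgebra.equalizingAlgebra_toAlgebra (X : JointAlgebra D) (j : J) :
    equalizingAlgebra D j (X.toAlgebra j) := fun _ f g => by
  simp only [JointAlgebra.toAlgebra, X.compat]

variable (D) (j : J)

def jointAlgebraToEqualizing :
    JointAlgebra D ⥤ ObjectProperty.FullSubcategory (equalizingAlgebra D j) where
  obj X := ⟨X.toAlgebra j, X.equalizingAlgebra_toAlgebra j⟩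
  map h := ObjectProperty.homMk ⟨h.f, h.comm j⟩

variable {j} (t : ∀ i, i ⟶ j)

def equalizingToJointAlgebra :
    ObjectProperty.FullSubcategory (equalizingAlgebra D j) ⥤ JointAlgebra D where
  obj X :=
    { pt := X.obj.A
      act i := ((Monad.algebraFunctorOfMonadHom (D.map (t i))).obj X.obj).a
      unit i := ((Monad.algebraFunctorOfMonadHom (D.map (t i))).obj X.obj).unit
      assoc i := ((Monad.algebraFunctorOfMonadHom (D.map (t i))).obj X.obj).assoc.symm
      compat {i i'} f := by
        simp only [Monad.algebraFunctorOfMonadHom_obj_a]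
        rw [← X.property i (f ≫ t i') (t i), D.map_comp, MonadHom.comp_toNatTrans,
          NatTrans.comp_app, Category.assoc] }
  map h :=
    { f := h.hom.f
      comm i := ((Monad.algebraFunctorOfMonadHom (D.map (t i))).map h.hom).h }

theorem jointAlgebraToEqualizing_comp_equalizingToJointAlgebra :
    jointAlgebraToEqualizing D j ⋙ equalizingToJointAlgebra D t = 𝟭 _ :=
  Functor.eq_id_of_comp_faithful (jointForget D) (fun X => by
    dsimp [jointAlgebraToEqualizing, equalizingToJointAlgebra]
    congr 1
    funext i
    exact X.compat (t i)) rfl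

theorem equalizingToJointAlgebra_comp_jointAlgebraToEqualizing :
    equalizingToJointAlgebra D t ⋙ jointAlgebraToEqualizing D j = 𝟭 _ :=
  Functor.eq_id_of_comp_faithful (ObjectProperty.ι _ ⋙ Monad.forget (D.obj j)) (fun X => by
    obtain ⟨⟨A, a, _, _⟩, hX⟩ := X
    ext1
    dsimp [jointAlgebraToEqualizing, equalizingToJointAlgebra, JointAlgebra.toAlgebra]
    congr 1
    simpa using hX j (t j) (𝟙 j)) rfl

end

theorem stmt12_general (D : J ⥤ Monad A) (j : J) (hj : ∀ i : J, Nonempty (i ⟶ j)) :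
    ∃ (E : JointAlgebra D ⥤ ObjectProperty.FullSubcategory (equalizingAlgebra D j))
      (E' : ObjectProperty.FullSubcategory (equalizingAlgebra D j) ⥤ JointAlgebra D),
      E ⋙ E' = 𝟭 _ ∧ E' ⋙ E = 𝟭 _ ∧
      E ⋙ (ObjectProperty.ι _ ⋙ Monad.forget (D.obj j)) = jointForget D := by
  let t i := (hj i).some
  exact ⟨jointAlgebraToEqualizing D j, equalizingToJointAlgebra D t,
    jointAlgebraToEqualizing_comp_equalizingToJointAlgebra D t,
    equalizingToJointAlgebra_comp_jointAlgebraToEqualizing D t, rfl⟩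

/-- For a diagram `D` of monads with weakly terminal object `T_j`, the category of
joint Eilenberg–Moore algebras is isomorphic, over `A`, to the full subcategory of
the Eilenberg–Moore category of `D.obj j` of algebras equalizing all parallel pairs
of connecting morphisms into `j`. -/
theorem stmt12 (hA : HasLimits A) (hA' : HasColimits A) (hst : StableMonos A)
    (hsplit : ∀ {X Y : A} (f : X ⟶ Y), StrongEpi f → IsSplitEpi f)
    (D : J ⥤ Monad A) (j : J) (hj : ∀ i : J, Nonempty (i ⟶ j)) :
    ∃ (E : JointAlgebra D ⥤ ObjectProperty.FullSubcategory (equalizingAlgebra D j))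
      (E' : ObjectProperty.FullSubcategory (equalizingAlgebra D j) ⥤ JointAlgebra D),
      E ⋙ E' = 𝟭 _ ∧ E' ⋙ E = 𝟭 _ ∧
      E ⋙ (ObjectProperty.ι _ ⋙ Monad.forget (D.obj j)) = jointForget D :=
  stmt12_general D j hj
end

section
/- For the category Gra of graphs (the presheaf category Set^{⇉}), the category Monad(Gra) does not have all coequalizers: there is a parallel pair of monad morphisms between free monads whose coequalizer does not exist in Monad(Gra). -/
open CategoryTheory CategoryTheory.Limits

universe v u

/-- The category of graphs as the presheaf-like functor category `Set^⇉`. -/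
abbrev Gra := WalkingParallelPair ⥤ Type

/-- `F` is a free monad on the endofunctor `H`: there is a universal arrow
`η : H ⟶ F` such that every natural transformation from `H` into the underlying
functor of a monad `M` extends uniquely to a monad morphism `F ⟶ M`. -/
def IsFreeMonadOn {A : Type u} [Category.{v} A] (H : A ⥤ A) (F : Monad A) : Prop :=
  ∃ η : H ⟶ F.toFunctor, ∀ (M : Monad A) (f : H ⟶ M.toFunctor),
    ∃! g : F ⟶ M, η ≫ (monadToFunctor A).map g = f

/-!
Let `H`, `K`, `L` send a graph `X` to the discrete graph, the family of arrows and the family of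
loops indexed by the sets of loops of `X`; `L` is the coequalizer of the source and target
inclusions `σ, τ : H ⟶ K`. As `H X` and `K X` have no loops, `X ⨿ H X` and `X ⨿ K X` have the
same loops as `X`, so these coproducts already are the free monads `F_H` and `F_K`. A coequalizer
of the monad maps `F_H ⇉ F_K` induced by `σ, τ` would be a free monad `Q` on `L`. On a presheaf
category, a free monad `Q` on `L` makes `Q ∅` an initial `L`-algebra: each `L`-algebra, and each
morphism of `L`-algebras, yields a map from `L` into a codensity monad, hence a monad map out of
`Q`, and evaluating it at `∅` gives existence and uniqueness of algebra maps out of `Q ∅`. By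
Lambek's lemma an initial algebra `I` has `L I ≅ I`, which embeds the power set of the loops of
`I` into the loops of `I`, contradicting Cantor's theorem.
-/

section FreeMonad

variable {A : Type u} [Category.{v} A]

def IsFreeMonadArrow {H : A ⥤ A} {F : Monad A} (ι : H ⟶ F.toFunctor) : Prop :=
  ∀ (M : Monad A) (f : H ⟶ M.toFunctor), ∃! g : F ⟶ M, ι ≫ g.toNatTrans = f

namespace IsFreeMonadArrow

variable {H : A ⥤ A} {F M : Monad A} {ι : H ⟶ F.toFunctor} (hι : IsFreeMonadArrow ι)
include hι

theorem isFreeMonadOn : IsFreeMonadOn H F := ⟨ι, hι⟩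

noncomputable def lift (f : H ⟶ M.toFunctor) : F ⟶ M := (hι M f).exists.choose

@[simp]
lemma lift_fac (f : H ⟶ M.toFunctor) : ι ≫ (hι.lift f).toNatTrans = f :=
  (hι M f).exists.choose_spec

lemma hom_ext {g₁ g₂ : F ⟶ M} (h : ι ≫ g₁.toNatTrans = ι ≫ g₂.toNatTrans) : g₁ = g₂ :=
  (hι M _).unique h rfl

theorem isFreeMonadOn_coequalizer {K L : A ⥤ A} {σ τ : H ⟶ K} {π : K ⟶ L}
    {w : σ ≫ π = τ ≫ π} (hπ : IsColimit (Cofork.ofπ π w))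
    {FK : Monad A} {ιK : K ⟶ FK.toFunctor} (hK : IsFreeMonadArrow ιK) {p q : F ⟶ FK}
    (hp : ι ≫ p.toNatTrans = σ ≫ ιK) (hq : ι ≫ q.toNatTrans = τ ≫ ιK) [HasCoequalizer p q] :
    IsFreeMonadOn L (coequalizer p q) := by
  let c := coequalizer.π p q
  have hc : σ ≫ ιK ≫ c.toNatTrans = τ ≫ ιK ≫ c.toNatTrans := by
    rw [← reassoc_of% hp, ← reassoc_of% hq, ← MonadHom.comp_toNatTrans,
      ← MonadHom.comp_toNatTrans, coequalizer.condition]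
  have hπ_desc : π ≫ Cofork.IsColimit.desc hπ _ hc = ιK ≫ c.toNatTrans :=
    Cofork.IsColimit.π_desc' hπ _ hc
  refine IsFreeMonadArrow.isFreeMonadOn (ι := Cofork.IsColimit.desc hπ _ hc) fun M f => ?_
  let g := hK.lift (π ≫ f)
  have hpq : p ≫ g = q ≫ g := hι.hom_ext <| by
    simp only [g, MonadHom.comp_toNatTrans, reassoc_of% hp, reassoc_of% hq, lift_fac,
      reassoc_of% w]
  refine ⟨coequalizer.desc g hpq, ?_, fun g' hg' => ?_⟩
  · refine Cofork.IsColimit.hom_ext hπ ?_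
    simp only [Cofork.π_ofπ, reassoc_of% hπ_desc, c, ← MonadHom.comp_toNatTrans,
      coequalizer.π_desc, g, lift_fac]
  · refine coequalizer.hom_ext (hK.hom_ext ?_)
    rw [coequalizer.π_desc, lift_fac, MonadHom.comp_toNatTrans, ← hg', reassoc_of% hπ_desc]

end IsFreeMonadArrow

end FreeMonad

section CoprodFreeMonad

variable {A : Type u} [Category.{v} A] [HasBinaryCoproducts A] (H : A ⥤ A)
  [∀ X, IsIso (H.map (coprod.inl : X ⟶ X ⨿ H.obj X))]

namespace CoprodFreeMonad

noncomputable abbrev functor : A ⥤ A where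
  obj X := X ⨿ H.obj X
  map f := coprod.map f (H.map f)

variable {H} in
lemma map_coprod_desc {X Y : A} (f : X ⟶ Y) (g : H.obj X ⟶ Y) :
    H.map (coprod.desc f g) = inv (H.map (coprod.inl : X ⟶ X ⨿ H.obj X)) ≫ H.map f := by
  rw [IsIso.eq_inv_comp, ← H.map_comp, coprod.inl_desc]

end CoprodFreeMonad

open CoprodFreeMonad in
noncomputable abbrev coprodFreeMonad : Monad A where
  toFunctor := functor H
  η := { app X := coprod.inl }
  μ :=
    { app X := coprod.desc (𝟙 _) (inv (H.map coprod.inl) ≫ coprod.inr)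
      naturality X Y f := by
        apply coprod.hom_ext
        · simp [coprod.inl_desc]
        · simp [coprod.inr_desc, IsIso.eq_inv_comp, ← Functor.map_comp_assoc] }
  assoc X := by
    apply coprod.hom_ext
    · simp [coprod.inl_desc]
    · simp [coprod.inr_desc, map_coprod_desc]
  left_unit X := coprod.inl_desc _ _
  right_unit X := by apply coprod.hom_ext <;> simp

namespace CoprodFreeMonad

@[simps]
noncomputable def ι : H ⟶ (coprodFreeMonad H).toFunctor where
  app X := coprod.inr

variable {H} {M : Monad A} (f : H ⟶ M.toFunctor)

@[simps]
noncomputable def lift : coprodFreeMonad H ⟶ M where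
  toNatTrans :=
    { app X := coprod.desc (M.η.app X) (f.app X)
      naturality X Y φ := by
        apply coprod.hom_ext
        · simpa [coprod.inl_desc] using M.η.naturality φ
        · simp [coprod.inr_desc] }
  app_η X := coprod.inl_desc _ _
  app_μ X := by
    apply coprod.hom_ext
    · simp [coprod.inl_desc]
    · dsimp only [coprodFreeMonad, functor]
      rw [coprod.inr_desc_assoc, Category.assoc, coprod.inr_desc, Category.assoc,
        coprod.inr_map_assoc, coprod.inr_desc_assoc, map_coprod_desc, Category.assoc,
        f.naturality_assoc]
      simp

end CoprodFreeMonad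

theorem isFreeMonadArrow_coprodFreeMonad : IsFreeMonadArrow (CoprodFreeMonad.ι H) := by
  intro M f
  refine ⟨CoprodFreeMonad.lift f, by ext; exact coprod.inr_desc _ _, fun g hg => ?_⟩
  ext X : 2
  apply coprod.hom_ext
  · simpa [coprod.inl_desc] using g.app_η X
  · simpa [coprod.inr_desc] using congr_app hg X

end CoprodFreeMonad

lemma CategoryTheory.Monad.Algebra.μ_app_map_comp_a {A : Type u} [Category.{v} A] {Q : Monad A}
    (α : Q.Algebra) {B : A} (k : B ⟶ α.A) :
    Q.μ.app B ≫ Q.map k ≫ α.a = Q.map (Q.map k ≫ α.a) ≫ α.a := by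
  rw [Q.map_comp_assoc, ← α.assoc, ← Q.μ.naturality_assoc]
  rfl

section Codensity

variable {C : Type} [SmallCategory C] {X Y : C ⥤ Type} (h : X ⟶ Y)

namespace CodensityMonad

@[ext]
structure Elem (A : C ⥤ Type) (c : C) where
  fst : (A ⟶ X) → X.obj c
  snd : (A ⟶ Y) → Y.obj c
  comm : ∀ k, h.app c (fst k) = snd (k ≫ h)

abbrev obj (A : C ⥤ Type) : C ⥤ Type where
  obj := Elem h A
  map f := ↾fun p => ⟨fun k => X.map f (p.fst k), fun k => Y.map f (p.snd k),
    fun k => by rw [← p.comm, NatTrans.naturality_apply]⟩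

def evalFst {A : C ⥤ Type} (k : A ⟶ X) : obj h A ⟶ X where
  app c := ↾fun p => p.fst k

def evalSnd {A : C ⥤ Type} (k : A ⟶ Y) : obj h A ⟶ Y where
  app c := ↾fun p => p.snd k

lemma evalFst_comp {A : C ⥤ Type} (k : A ⟶ X) : evalFst h k ≫ h = evalSnd h (k ≫ h) := by
  ext c p
  exact p.comm k

abbrev functor : (C ⥤ Type) ⥤ (C ⥤ Type) where
  obj := obj h
  map φ :=
    { app c := ↾fun p => ⟨fun k => p.fst (φ ≫ k), fun k => p.snd (φ ≫ k),
        fun k => by rw [p.comm, Category.assoc]⟩ }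

def unit (A : C ⥤ Type) : A ⟶ obj h A where
  app c := ↾fun a => ⟨fun k => k.app c a, fun k => k.app c a, fun _ => rfl⟩
  naturality c d f := by
    ext a k <;> exact NatTrans.naturality_apply k f a

def mult (A : C ⥤ Type) : obj h (obj h A) ⟶ obj h A where
  app c := ↾fun p => ⟨fun k => p.fst (evalFst h k), fun k => p.snd (evalSnd h k),
    fun k => by rw [p.comm, evalFst_comp]⟩

end CodensityMonad

open CodensityMonad in
/-- For `h = 𝟙 X` this is the endomorphism monad `A ↦ X ^ (A ⟶ X)`, whose monad maps from `Q`
are the `Q`-algebra structures on `X`; in general it is the codensity monad of `h`, seen as a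
diagram indexed by the walking arrow, and monad maps into it are compatible pairs of such. -/
abbrev codensityMonad : Monad (C ⥤ Type) where
  toFunctor := functor h
  η := { app := unit h }
  μ := { app := mult h }

namespace CodensityMonad

def restrictFst : codensityMonad h ⟶ codensityMonad (𝟙 X) where
  app A := { app c := ↾fun p => ⟨p.fst, p.fst, fun _ => rfl⟩ }

def restrictSnd : codensityMonad h ⟶ codensityMonad (𝟙 Y) where
  app A := { app c := ↾fun p => ⟨p.snd, p.snd, fun _ => rfl⟩ }

lemma μ_evalFst {A : C ⥤ Type} (k : A ⟶ X) :
    (codensityMonad h).μ.app A ≫ evalFst h k = evalFst h (evalFst h k) := rfl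

lemma restrictFst_evalFst {A : C ⥤ Type} (k : A ⟶ X) :
    (restrictFst h).app A ≫ evalFst (𝟙 X) k = evalFst h k := rfl

lemma restrictSnd_evalFst {A : C ⥤ Type} (k : A ⟶ Y) :
    (restrictSnd h).app A ≫ evalFst (𝟙 Y) k = evalSnd h k := rfl

variable {L : (C ⥤ Type) ⥤ (C ⥤ Type)} {A₀ A₁ : Endofunctor.Algebra L}

def ofAlgebraHom (f : A₀ ⟶ A₁) : L ⟶ (codensityMonad f.f).toFunctor where
  app B :=
    { app c := ↾fun l => ⟨fun k => A₀.str.app c ((L.map k).app c l),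
        fun k => A₁.str.app c ((L.map k).app c l), fun k => by
          rw [← NatTrans.comp_app_apply, ← f.h, L.map_comp, NatTrans.comp_app_apply,
            NatTrans.comp_app_apply]⟩
      naturality c d g := by
        ext l k <;> simp [NatTrans.naturality_apply] }
  naturality B B' φ := by
    ext c l k <;> simp

lemma ofAlgebraHom_restrictFst (f : A₀ ⟶ A₁) :
    ofAlgebraHom f ≫ (restrictFst f.f).toNatTrans = ofAlgebraHom (𝟙 A₀) := rfl

lemma ofAlgebraHom_restrictSnd (f : A₀ ⟶ A₁) :
    ofAlgebraHom f ≫ (restrictSnd f.f).toNatTrans = ofAlgebraHom (𝟙 A₁) := rfl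

lemma ofAlgebraHom_app_evalFst (f : A₀ ⟶ A₁) {B : C ⥤ Type} (k : B ⟶ A₀.a) :
    (ofAlgebraHom f).app B ≫ evalFst f.f k = L.map k ≫ A₀.str := rfl

end CodensityMonad

namespace CategoryTheory.Monad.Algebra

variable {Q : Monad (C ⥤ Type)} (α : Q.Algebra)

def toCodensityNatTrans : Q.toFunctor ⟶ CodensityMonad.functor (𝟙 α.A) where
  app B :=
    { app c := ↾fun q => ⟨fun k => (Q.map k ≫ α.a).app c q,
        fun k => (Q.map k ≫ α.a).app c q, fun _ => rfl⟩
      naturality c d f := by ext q k <;> simp [NatTrans.naturality_apply] }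
  naturality B B' φ := by ext c q k <;> simp

lemma toCodensityNatTrans_app_evalFst {B : C ⥤ Type} (k : B ⟶ α.A) :
    α.toCodensityNatTrans.app B ≫ CodensityMonad.evalFst (𝟙 α.A) k = Q.map k ≫ α.a := rfl

lemma toCodensityNatTrans_app_evalSnd {B : C ⥤ Type} (k : B ⟶ α.A) :
    α.toCodensityNatTrans.app B ≫ CodensityMonad.evalSnd (𝟙 α.A) k = Q.map k ≫ α.a := rfl

def toCodensityMonad : Q ⟶ codensityMonad (𝟙 α.A) where
  toNatTrans := α.toCodensityNatTrans
  app_η B := by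
    ext c b k <;>
    · show (Q.η.app B ≫ Q.map k ≫ α.a).app c b = k.app c b
      rw [← Q.η.naturality_assoc, α.unit]
      rfl
  app_μ B := by
    ext c q k
    · show (Q.μ.app B ≫ Q.map k ≫ α.a).app c q =
        (Q.map (α.toCodensityNatTrans.app B) ≫ Q.map (CodensityMonad.evalFst _ k) ≫ α.a).app c q
      rw [← Q.map_comp_assoc, toCodensityNatTrans_app_evalFst, μ_app_map_comp_a]
    · show (Q.μ.app B ≫ Q.map k ≫ α.a).app c q =
        (Q.map (α.toCodensityNatTrans.app B) ≫ Q.map (CodensityMonad.evalSnd _ k) ≫ α.a).app c q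
      rw [← Q.map_comp_assoc, toCodensityNatTrans_app_evalSnd, μ_app_map_comp_a]

end CategoryTheory.Monad.Algebra

end Codensity

section InitialAlgebra

open CodensityMonad

variable {C : Type} [SmallCategory C] {L : (C ⥤ Type) ⥤ (C ⥤ Type)} {Q : Monad (C ⥤ Type)}
  (ι : L ⟶ Q.toFunctor)

noncomputable def algebraAtInitial : Endofunctor.Algebra L where
  a := Q.obj (⊥_ _)
  str := ι.app _ ≫ Q.μ.app _

namespace IsFreeMonadArrow

variable {ι} (hι : IsFreeMonadArrow ι)

noncomputable def toAlgebra (A : Endofunctor.Algebra L) : Q.obj (⊥_ _) ⟶ A.a :=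
  (hι.lift (ofAlgebraHom (𝟙 A))).app _ ≫ evalFst _ (initial.to A.a)

lemma toAlgebra_comp {A₀ A₁ : Endofunctor.Algebra L} (f : A₀ ⟶ A₁) :
    hι.toAlgebra A₀ ≫ f.f = hι.toAlgebra A₁ := by
  let g := hι.lift (ofAlgebraHom f)
  have h₀ : g ≫ restrictFst f.f = hι.lift (ofAlgebraHom (𝟙 A₀)) := hι.hom_ext <|
    (Category.assoc _ _ _).symm.trans <| (eq_whisker (hι.lift_fac _) _).trans <|
      (ofAlgebraHom_restrictFst f).trans (hι.lift_fac _).symm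
  have h₁ : g ≫ restrictSnd f.f = hι.lift (ofAlgebraHom (𝟙 A₁)) := hι.hom_ext <|
    (Category.assoc _ _ _).symm.trans <| (eq_whisker (hι.lift_fac _) _).trans <|
      (ofAlgebraHom_restrictSnd f).trans (hι.lift_fac _).symm
  rw [toAlgebra, toAlgebra, ← h₀, ← h₁]
  change g.app _ ≫ (restrictFst f.f).app _ ≫ evalFst _ _ ≫ f.f =
    g.app _ ≫ (restrictSnd f.f).app _ ≫ evalFst _ _
  rw [reassoc_of% restrictFst_evalFst, restrictSnd_evalFst, evalFst_comp,
    initial.hom_ext (initial.to _ ≫ f.f) (initial.to _)]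

lemma toAlgebra_algebraAtInitial : hι.toAlgebra (algebraAtInitial ι) = 𝟙 _ := by
  have : hι.lift (ofAlgebraHom (𝟙 (algebraAtInitial ι))) =
      ((Monad.free Q).obj (⊥_ _)).toCodensityMonad :=
    hι.hom_ext <| by
      rw [hι.lift_fac]
      ext B c l k <;>
      exact types_congr_hom (congr_app (ι.naturality_assoc k (Q.μ.app _)) c) l
  rw [toAlgebra, this]
  change Q.map (initial.to _) ≫ Q.μ.app _ = 𝟙 _
  rw [initial.hom_ext (initial.to _) (Q.η.app (⊥_ (C ⥤ Type))), Q.right_unit]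
  rfl

lemma map_toAlgebra_comp_str (A : Endofunctor.Algebra L) :
    L.map (hι.toAlgebra A) ≫ A.str = (algebraAtInitial ι).str ≫ hι.toAlgebra A := by
  let g := hι.lift (ofAlgebraHom (𝟙 A))
  have hg (B) : ι.app B ≫ g.app B = (ofAlgebraHom (𝟙 A)).app B := congr_app (hι.lift_fac _) B
  change L.map (g.app _ ≫ evalFst _ _) ≫ A.str = ι.app _ ≫ Q.μ.app _ ≫ g.app _ ≫ evalFst _ _
  rw [g.app_μ_assoc, ← ι.naturality_assoc, μ_evalFst, reassoc_of% hg, ofAlgebraHom_app_evalFst,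
    L.map_comp_assoc]

noncomputable def isInitialAlgebraAtInitial : IsInitial (algebraAtInitial ι) :=
  IsInitial.ofUniqueHom (fun A => ⟨hι.toAlgebra A, hι.map_toAlgebra_comp_str A⟩) fun A f =>
    Endofunctor.Algebra.ext <| by
      change f.f = hι.toAlgebra A
      rw [← hι.toAlgebra_comp f, hι.toAlgebra_algebraAtInitial]
      exact (Category.id_comp f.f).symm

end IsFreeMonadArrow

theorem IsFreeMonadOn.exists_isInitial (h : IsFreeMonadOn L Q) :
    ∃ A : Endofunctor.Algebra L, Nonempty (IsInitial A) :=
  let ⟨_, hι⟩ := h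
  ⟨_, ⟨IsFreeMonadArrow.isInitialAlgebraAtInitial hι⟩⟩

end InitialAlgebra

namespace Gra

open WalkingParallelPair WalkingParallelPairHom

def loops : Gra ⥤ Type where
  obj X := {e : X.obj zero // X.map left e = X.map right e}
  map f := ↾fun l => ⟨f.app zero l.1, by
    rw [← NatTrans.naturality_apply f left, ← NatTrans.naturality_apply f right, l.2]⟩

lemma bijective_loops_map_coprod_inl {X Y : Gra} [IsEmpty (loops.obj Y)] :
    Function.Bijective (loops.map (FunctorToTypes.coprod.inl : X ⟶ FunctorToTypes.coprod X Y)) := by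
  refine ⟨fun l l' h => Subtype.ext (Sum.inl_injective (congr_arg Subtype.val h)), ?_⟩
  rintro ⟨e | e, he⟩
  · exact ⟨⟨e, Sum.inl_injective he⟩, rfl⟩
  · exact isEmptyElim (α := loops.obj Y) ⟨e, Sum.inr_injective he⟩

instance isIso_loops_map_inl {X Y : Gra} [IsEmpty (loops.obj Y)] :
    IsIso (loops.map (coprod.inl : X ⟶ X ⨿ Y)) := by
  have : IsIso (loops.map (coprod.inl ≫ (FunctorToTypes.binaryCoproductIso X Y).hom)) := by
    rw [FunctorToTypes.inl_comp_binaryCoproductIso_hom, isIso_iff_bijective]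
    exact bijective_loops_map_coprod_inl
  rw [loops.map_comp] at this
  exact IsIso.of_isIso_comp_right _ (loops.map (FunctorToTypes.binaryCoproductIso X Y).hom)

def discrete : Type ⥤ Gra where
  obj S := parallelPair (↾(PEmpty.elim : PEmpty → S)) (↾PEmpty.elim)
  map f := parallelPairHom _ _ _ _ (𝟙 _) (↾f) (by ext ⟨⟩) (by ext ⟨⟩)
  map_id S := by ext j x; cases j <;> rfl
  map_comp f g := by ext j x; cases j <;> rfl

def arrows : Type ⥤ Gra where
  obj S := parallelPair (↾fun s : S => (s, false)) (↾fun s => (s, true))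
  map f := parallelPairHom _ _ _ _ (↾f) (↾Prod.map f id) rfl rfl
  map_id S := by ext j x; cases j <;> rfl
  map_comp f g := by ext j x; cases j <;> rfl

def bouquet : Type ⥤ Gra where
  obj S := parallelPair (𝟙 S) (𝟙 S)
  map f := parallelPairHom _ _ _ _ f f rfl rfl
  map_id S := by ext j x; cases j <;> rfl
  map_comp f g := by ext j x; cases j <;> rfl

instance (S : Type) : IsEmpty (loops.obj (discrete.obj S)) := ⟨fun l => l.1.elim⟩

instance (S : Type) : IsEmpty (loops.obj (arrows.obj S)) :=
  ⟨fun l => Bool.false_ne_true (congr_arg Prod.snd l.2)⟩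

def source : discrete ⟶ arrows where
  app S := parallelPairHom _ _ _ _ (↾PEmpty.elim) (↾fun s => (s, false)) (by ext ⟨⟩) (by ext ⟨⟩)
  naturality S T f := by ext j x; cases j; exacts [x.elim, rfl]

def target : discrete ⟶ arrows where
  app S := parallelPairHom _ _ _ _ (↾PEmpty.elim) (↾fun s => (s, true)) (by ext ⟨⟩) (by ext ⟨⟩)
  naturality S T f := by ext j x; cases j; exacts [x.elim, rfl]

def glue : arrows ⟶ bouquet where
  app S := parallelPairHom _ _ _ _ (𝟙 S) (↾Prod.fst) rfl rfl
  naturality S T f := by ext j x; cases j <;> rfl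

lemma source_comp_glue : source ≫ glue = target ≫ glue := by
  ext S j x
  cases j; exacts [x.elim, rfl]

section

variable {D : Type*} [Category D] {G : D ⥤ Type} {M : D ⥤ Gra} (π : G ⋙ arrows ⟶ M)
  (hπ : G.whiskerLeft source ≫ π = G.whiskerLeft target ≫ π)
include hπ

lemma app_one_false_eq_true (d : D) (x : G.obj d) :
    (π.app d).app one (x, false) = (π.app d).app one (x, true) :=
  types_congr_hom (congr_app (congr_app hπ d) one) x

def glueDesc : G ⋙ bouquet ⟶ M where
  app d := parallelPairHomMk ((π.app d).app zero) (↾fun x => (π.app d).app one (x, false))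
    (by
      ext x
      change (π.app d).app one (x, false) = (M.obj d).map left ((π.app d).app zero x)
      exact NatTrans.naturality_apply (π.app d) left x)
    (by
      ext x
      change (π.app d).app one (x, false) = (M.obj d).map right ((π.app d).app zero x)
      exact (app_one_false_eq_true π hπ d x).trans (NatTrans.naturality_apply (π.app d) right x))
  naturality d d' f := by
    ext j x
    cases j
    exacts [types_congr_hom (congr_app (π.naturality f) zero) x,
      types_congr_hom (congr_app (π.naturality f) one) (x, false)]

end

lemma whiskerLeft_source_comp_glue {D : Type*} [Category D] (G : D ⥤ Type) :
    G.whiskerLeft source ≫ G.whiskerLeft glue = G.whiskerLeft target ≫ G.whiskerLeft glue := by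
  rw [← Functor.whiskerLeft_comp, source_comp_glue, Functor.whiskerLeft_comp]

def isColimitGlue {D : Type*} [Category D] (G : D ⥤ Type) :
    IsColimit (Cofork.ofπ (G.whiskerLeft glue) (whiskerLeft_source_comp_glue G)) :=
  Cofork.IsColimit.mk' _ fun s => by
    refine ⟨glueDesc s.π s.condition, ?_, fun {m} hm => ?_⟩
    · ext d j x
      cases j
      · rfl
      · obtain ⟨y, _ | _⟩ := x
        · rfl
        · exact app_one_false_eq_true s.π s.condition d y
    · ext d j x
      cases j
      exacts [types_congr_hom (congr_app (congr_app hm d) zero) x,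
        types_congr_hom (congr_app (congr_app hm d) one) (x, false)]

/-- The functors `H`, `K`, `L` of the informal argument are `loopSets ⋙ discrete`,
`loopSets ⋙ arrows` and `loopSets ⋙ bouquet`. -/
abbrev loopSets : Gra ⥤ Type := loops ⋙ ofTypeFunctor Set

instance isIso_loopSets_comp_map_inl (E : Type ⥤ Gra) [∀ S, IsEmpty (loops.obj (E.obj S))]
    (X : Gra) : IsIso ((loopSets ⋙ E).map (coprod.inl : X ⟶ X ⨿ (loopSets ⋙ E).obj X)) :=
  have : IsEmpty (loops.obj ((loopSets ⋙ E).obj X)) :=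
    inferInstanceAs (IsEmpty (loops.obj (E.obj _)))
  Functor.map_isIso (ofTypeFunctor Set ⋙ E) (loops.map coprod.inl)

theorem not_isFreeMonadOn (Q : Monad Gra) : ¬ IsFreeMonadOn (loopSets ⋙ bouquet) Q := by
  intro hQ
  obtain ⟨A, ⟨hA⟩⟩ := hQ.exists_isInitial
  have := Endofunctor.Algebra.Initial.str_isIso hA
  refine Function.cantor_injective (fun U : Set (loops.obj A.a) => loops.map A.str ⟨U, rfl⟩) ?_
  intro U V h
  exact congr_arg Subtype.val ((mono_iff_injective (loops.map A.str)).1 inferInstance h)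

end Gra

/-- `Monad Gra` does not have all coequalizers: there is a parallel pair of monad
morphisms between free monads whose coequalizer does not exist. -/
theorem stmt13 :
    ∃ (H K : Gra ⥤ Gra) (FH FK : Monad Gra)
      (_ : IsFreeMonadOn H FH) (_ : IsFreeMonadOn K FK)
      (p q : FH ⟶ FK), ¬ HasColimit (parallelPair p q) := by
  have hH := isFreeMonadArrow_coprodFreeMonad (Gra.loopSets ⋙ Gra.discrete)
  have hK := isFreeMonadArrow_coprodFreeMonad (Gra.loopSets ⋙ Gra.arrows)
  refine ⟨_, _, _, _, hH.isFreeMonadOn, hK.isFreeMonadOn,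
    hH.lift (Gra.loopSets.whiskerLeft Gra.source ≫ CoprodFreeMonad.ι _),
    hH.lift (Gra.loopSets.whiskerLeft Gra.target ≫ CoprodFreeMonad.ι _), fun _ => ?_⟩
  exact Gra.not_isFreeMonadOn _ <| hH.isFreeMonadOn_coequalizer (Gra.isColimitGlue Gra.loopSets)
    hK (hH.lift_fac _) (hH.lift_fac _)
end

section
/- Given separated monads S_i (i∈I) and an object A, every fixpoint (X_i)_{i∈I} of the functor H_A (i.e., X_i ≅ S̄_i(A + ∐_{j≠i} X_j) for all i) yields a multi-algebra structure on A + ∐_{i∈I} X_i: for each i, A + ∐_{i∈I} X_i ≅ S_i Y_i where Y_i = A + ∐_{j≠i} X_j, and the algebra structure for S_i is transported from the free-algebra structure μ^i_{Y_i}. -/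
open CategoryTheory CategoryTheory.Limits

universe v u

/-- Separation data for a monad `S`: a complement `S̄` of the unit, i.e. an
endofunctor of the category `A_m` of objects and monomorphisms of `A` (given by an
object assignment together with a functorial action on monomorphisms) such that
`S = Id + S̄` on `A_m`, with the unit `η` as the left coproduct injection.
A monad is *separated* if it preserves monomorphisms and admits such data. -/
structure SeparationData {A : Type u} [Category.{v} A] [HasBinaryCoproducts A]
    (S : Monad A) where
  /-- the action of `S̄` on objects -/
  obj : A → A
  /-- the action of `S̄` on monomorphisms -/
  map : ∀ {X Y : A} (f : X ⟶ Y), Mono f → (obj X ⟶ obj Y)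
  map_mono : ∀ {X Y : A} (f : X ⟶ Y) (hf : Mono f), Mono (map f hf)
  map_id : ∀ (X : A) (h : Mono (𝟙 X)), map (𝟙 X) h = 𝟙 (obj X)
  map_comp : ∀ {X Y Z : A} (f : X ⟶ Y) (g : Y ⟶ Z) (hf : Mono f) (hg : Mono g)
    (hfg : Mono (f ≫ g)), map (f ≫ g) hfg = map f hf ≫ map g hg
  /-- the right coproduct injection `S̄ X ⟶ S X` -/
  ι : ∀ X : A, obj X ⟶ S.toFunctor.obj X
  ι_mono : ∀ X : A, Mono (ι X)
  /-- `S X` is the coproduct `X + S̄ X` with the unit as the left injection -/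
  isCoprod : ∀ X : A, IsIso (Limits.coprod.desc (S.η.app X) (ι X))
  /-- naturality of the complement inclusion with respect to monomorphisms -/
  natural : ∀ {X Y : A} (f : X ⟶ Y) (hf : Mono f),
    map f hf ≫ ι Y = ι X ≫ S.toFunctor.map f

/-!
Splitting off the summand `X_i` rewrites `A + ∐_j X_j` as `Y_i + X_i`, and the fixpoint
equation turns this into `Y_i + S̄_i Y_i ≅ S_i Y_i`. Any object isomorphic to the carrier
of an Eilenberg–Moore algebra inherits an algebra structure by conjugation, so the free
algebra `(S_i Y_i, μ_{Y_i})` can be transported to `A + ∐_j X_j`.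
-/

namespace CategoryTheory

variable {C : Type u} [Category.{v} C]

def Monad.Algebra.ofIso {T : Monad C} (α : T.Algebra) {X : C} (e : X ≅ α.A) : T.Algebra where
  A := X
  a := T.map e.hom ≫ α.a ≫ e.inv
  unit := by
    rw [← T.η.naturality_assoc e.hom]
    simp [reassoc_of% α.unit]
  assoc := by
    have hμ : T.map (T.map e.hom) ≫ T.μ.app α.A = T.μ.app X ≫ T.map e.hom :=
      T.μ.naturality e.hom
    simp only [Functor.map_comp, Category.assoc, Iso.map_inv_hom_id_assoc]
    rw [← α.assoc_assoc, reassoc_of% hμ]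

noncomputable def Limits.Sigma.splitOffIso {I : Type v} [HasCoproducts.{v} C] [DecidableEq I]
    (f : I → C) (i : I) : ∐ f ≅ (∐ fun j : {j : I // j ≠ i} => f j) ⨿ f i where
  hom := Sigma.desc fun j =>
    if h : j = i then eqToHom (congrArg f h) ≫ coprod.inr
    else Sigma.ι (fun j : {j : I // j ≠ i} => f j) ⟨j, h⟩ ≫ coprod.inl
  inv := coprod.desc (Sigma.desc fun j => Sigma.ι f j.1) (Sigma.ι f i)
  hom_inv_id := by
    ext j
    by_cases h : j = i
    · subst h
      simp only [Sigma.ι_desc_assoc, dif_pos, eqToHom_refl, Category.id_comp, Category.comp_id]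
      rw [coprod.inr_desc]
    · simp only [Sigma.ι_desc_assoc, dif_neg h, Category.assoc, Category.comp_id]
      rw [coprod.inl_desc, Sigma.ι_desc]
  inv_hom_id := by
    ext j
    · simp only [Category.comp_id]
      rw [coprod.inl_desc_assoc, Sigma.ι_desc_assoc, Sigma.ι_desc, dif_neg j.2]
    · simp only [Category.comp_id]
      rw [coprod.inr_desc_assoc, Sigma.ι_desc, dif_pos rfl, eqToHom_refl, Category.id_comp]

noncomputable def SeparationData.coprodIso [HasBinaryCoproducts C] {S : Monad C}
    (sep : SeparationData S) (X : C) : X ⨿ sep.obj X ≅ S.obj X :=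
  @asIso _ _ _ _ _ (sep.isCoprod X)

end CategoryTheory

theorem stmt16_general (A : Type u) [Category.{v} A] [HasColimits A]
    {I : Type v} (S : I → Monad A)
    (sep : ∀ i, SeparationData (S i))
    (A₀ : A) (Xs : I → A)
    (hfix : ∀ i : I,
      Nonempty ((sep i).obj (A₀ ⨿ ∐ fun j : {j : I // j ≠ i} => Xs j.1) ≅ Xs i)) :
    ∀ i : I, ∃ e : (A₀ ⨿ ∐ fun i : I => Xs i) ≅
        (S i).toFunctor.obj (A₀ ⨿ ∐ fun j : {j : I // j ≠ i} => Xs j.1),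
      (S i).η.app (A₀ ⨿ ∐ fun i : I => Xs i) ≫
          ((S i).toFunctor.map e.hom ≫ (S i).μ.app _ ≫ e.inv) = 𝟙 _ ∧
      (S i).toFunctor.map ((S i).toFunctor.map e.hom ≫ (S i).μ.app _ ≫ e.inv) ≫
          ((S i).toFunctor.map e.hom ≫ (S i).μ.app _ ≫ e.inv) =
        (S i).μ.app (A₀ ⨿ ∐ fun i : I => Xs i) ≫
          ((S i).toFunctor.map e.hom ≫ (S i).μ.app _ ≫ e.inv) := by
  classical
  intro i
  let Y := A₀ ⨿ ∐ fun j : {j : I // j ≠ i} => Xs j.1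
  let e : (A₀ ⨿ ∐ Xs) ≅ (S i).obj Y :=
    coprod.mapIso (Iso.refl A₀) (Sigma.splitOffIso Xs i) ≪≫ (coprod.associator _ _ _).symm ≪≫
      coprod.mapIso (Iso.refl Y) (hfix i).some.symm ≪≫ (sep i).coprodIso Y
  let α := ((S i).free.obj Y).ofIso e
  exact ⟨e, α.unit, α.assoc.symm⟩

/-- Every fixpoint `(X_i)` of `H_{A₀}` (i.e. `X_i ≅ S̄_i Y_i` for
`Y_i = A₀ + ∐_{j≠i} X_j`) yields a multi-algebra structure on `A₀ + ∐ᵢ X_i`: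
for each `i` there is an isomorphism `A₀ + ∐ᵢ X_i ≅ S_i Y_i`, and the algebra
structure for `S_i` transported along it from the free-algebra structure
`μ^i_{Y_i}` is an Eilenberg–Moore algebra structure. -/
theorem stmt16 (A : Type u) [Category.{v} A] [HasColimits A]
    {I : Type v} (S : I → Monad A)
    (hmono : ∀ i, (S i).toFunctor.PreservesMonomorphisms)
    (sep : ∀ i, SeparationData (S i))
    (A₀ : A) (Xs : I → A)
    (hfix : ∀ i : I,
      Nonempty ((sep i).obj (A₀ ⨿ ∐ fun j : {j : I // j ≠ i} => Xs j.1) ≅ Xs i)) :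
    ∀ i : I, ∃ e : (A₀ ⨿ ∐ fun i : I => Xs i) ≅
        (S i).toFunctor.obj (A₀ ⨿ ∐ fun j : {j : I // j ≠ i} => Xs j.1),
      (S i).η.app (A₀ ⨿ ∐ fun i : I => Xs i) ≫
          ((S i).toFunctor.map e.hom ≫ (S i).μ.app _ ≫ e.inv) = 𝟙 _ ∧
      (S i).toFunctor.map ((S i).toFunctor.map e.hom ≫ (S i).μ.app _ ≫ e.inv) ≫
          ((S i).toFunctor.map e.hom ≫ (S i).μ.app _ ≫ e.inv) =
        (S i).μ.app (A₀ ⨿ ∐ fun i : I => Xs i) ≫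
          ((S i).toFunctor.map e.hom ≫ (S i).μ.app _ ≫ e.inv) :=
  stmt16_general A S sep A₀ Xs hfix
end

section
/- Let F and G be endofunctors of a category A and define the endofunctor H of A × A by H(V, W) = (FW, GV). If H has an initial algebra (X, Y), then X is an initial algebra of FG and Y is an initial algebra of GF; concretely, if the structure is given by isomorphisms x : FY → X and y : GX → Y, then y ∘ Gx : GFY → Y is an initial GF-algebra structure. -/
open CategoryTheory CategoryTheory.Limits

universe v u

variable {A : Type u} [Category.{v} A]

/-- For endofunctors `F G` of `A`, the endofunctor `H` of `A × A` given by
`H(V, W) = (F W, G V)`. -/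
def swapFunctor (F G : A ⥤ A) : A × A ⥤ A × A where
  obj p := (F.obj p.2, G.obj p.1)
  map f := (F.map f.2, G.map f.1)
  map_id p := by simp [prod_id]
  map_comp f g := by simp [prod_comp]

/-- If the functor `H(V,W) = (FW, GV)` has an initial algebra `(X, Y)` with
structure given by isomorphisms `x : F Y ⟶ X` and `y : G X ⟶ Y`, then
`F.map y ≫ x` is an initial algebra for `F ∘ G` on `X` and `G.map x ≫ y` is an
initial algebra for `G ∘ F` on `Y`. -/
theorem stmt18 (F G : A ⥤ A) (X Y : A) (x : F.obj Y ⟶ X) (y : G.obj X ⟶ Y)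
    [IsIso x] [IsIso y]
    (hinit : IsInitial (⟨(X, Y), (x, y)⟩ : Endofunctor.Algebra (swapFunctor F G))) :
    Nonempty (IsInitial (⟨X, F.map y ≫ x⟩ : Endofunctor.Algebra (G ⋙ F))) ∧
    Nonempty (IsInitial (⟨Y, G.map x ≫ y⟩ : Endofunctor.Algebra (F ⋙ G))) := by
  constructor
  · refine ⟨IsInitial.ofUniqueHom (fun V => ?_) (fun V m => ?_)⟩
    · -- existence
      let T : Endofunctor.Algebra (swapFunctor F G) :=
        ⟨(V.a, G.obj V.a), (V.str, 𝟙 _)⟩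
      let φ := hinit.to T
      have h1 : F.map φ.f.2 ≫ V.str = x ≫ φ.f.1 := congrArg Prod.fst φ.h
      have h2 : G.map φ.f.1 ≫ 𝟙 _ = y ≫ φ.f.2 := congrArg Prod.snd φ.h
      refine ⟨φ.f.1, ?_⟩
      have : G.map φ.f.1 = y ≫ φ.f.2 := by simpa using h2
      show F.map (G.map φ.f.1) ≫ V.str = (F.map y ≫ x) ≫ φ.f.1
      rw [this, F.map_comp, Category.assoc, h1, Category.assoc]
    · -- uniqueness
      let T : Endofunctor.Algebra (swapFunctor F G) :=
        ⟨(V.a, G.obj V.a), (V.str, 𝟙 _)⟩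
      have hm : F.map (G.map m.f) ≫ V.str = (F.map y ≫ x) ≫ m.f := m.h
      let ψ : (⟨(X, Y), (x, y)⟩ : Endofunctor.Algebra (swapFunctor F G)) ⟶ T :=
        { f := (m.f, inv y ≫ G.map m.f)
          h := by
            refine Prod.ext ?_ ?_
            · show F.map (inv y ≫ G.map m.f) ≫ V.str = x ≫ m.f
              rw [F.map_comp, Category.assoc, hm]
              simp
            · show G.map m.f ≫ 𝟙 _ = y ≫ inv y ≫ G.map m.f
              simp }
      have := hinit.hom_ext ψ (hinit.to T)
      apply Endofunctor.Algebra.Hom.ext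
      have : ψ.f.1 = (hinit.to T).f.1 := by rw [this]
      exact this
  · refine ⟨IsInitial.ofUniqueHom (fun V => ?_) (fun V m => ?_)⟩
    · let T : Endofunctor.Algebra (swapFunctor F G) :=
        ⟨(F.obj V.a, V.a), (𝟙 _, V.str)⟩
      let φ := hinit.to T
      have h1 : F.map φ.f.2 ≫ 𝟙 _ = x ≫ φ.f.1 := congrArg Prod.fst φ.h
      have h2 : G.map φ.f.1 ≫ V.str = y ≫ φ.f.2 := congrArg Prod.snd φ.h
      refine ⟨φ.f.2, ?_⟩
      have : F.map φ.f.2 = x ≫ φ.f.1 := by simpa using h1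
      show G.map (F.map φ.f.2) ≫ V.str = (G.map x ≫ y) ≫ φ.f.2
      rw [this, G.map_comp, Category.assoc, h2, Category.assoc]
    · have hm : G.map (F.map m.f) ≫ V.str = (G.map x ≫ y) ≫ m.f := m.h
      let T : Endofunctor.Algebra (swapFunctor F G) :=
        ⟨(F.obj V.a, V.a), (𝟙 _, V.str)⟩
      let ψ : (⟨(X, Y), (x, y)⟩ : Endofunctor.Algebra (swapFunctor F G)) ⟶ T :=
        { f := (inv x ≫ F.map m.f, m.f)
          h := by
            refine Prod.ext ?_ ?_
            · show F.map m.f ≫ 𝟙 _ = x ≫ inv x ≫ F.map m.f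
              simp
            · show G.map (inv x ≫ F.map m.f) ≫ V.str = y ≫ m.f
              rw [G.map_comp, Category.assoc, hm]
              simp }
      have := hinit.hom_ext ψ (hinit.to T)
      apply Endofunctor.Algebra.Hom.ext
      have : ψ.f.2 = (hinit.to T).f.2 := by rw [this]
      exact this
end
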